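/- In GP(n,k) with n > 80 and 1 ≤ k < n/2, there exists an 8-cycle using exactly five outer edges, two spokes, and one inner edge if and only if k = 5. -/

import Mathlib

/-!
Let `C` be an 8-cycle of `GP(n,k)` with exactly one inner edge `vₚv_q`, `q = p + k`. Every inner
vertex of `C` needs a second `C`-neighbour besides its inner one, so the spokes of `C` are exactly
`uₚvₚ` and `u_qv_q`. At every outer vertex `uₐ` the degree in `C` is even, so the outer edges
`uₐ₋₁uₐ` and `uₐuₐ₊₁` are either both in `C` or both not, unless `a ∈ {p, q}`. Hence the set `S` of
indices of the outer edges changes membership along `ℤ/n` exactly at `p` and `q`, and the discrete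
integration by parts `∑ₐ a (1_S(a) - 1_S(a-1)) = -|S|` gives `|S| ≡ ±(q - p) = ±k (mod n)`.
With `|S| = 5` and `k < n/2` this forces `k = 5`; conversely `u₀u₁u₂u₃u₄u₅v₅v₀` is such a cycle
in `GP(n,5)`.
-/

open SimpleGraph

/-- The generalized Petersen graph `GP(n,k)`: vertices `Sum.inl i = uᵢ` (outer) and
`Sum.inr i = vᵢ` (inner), with edges `uᵢuᵢ₊₁`, `uᵢvᵢ`, `vᵢvᵢ₊ₖ` (indices mod `n`). -/
def GP (n k : ℕ) : SimpleGraph (ZMod n ⊕ ZMod n) :=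
  SimpleGraph.fromRel (fun a b => ∃ i : ZMod n,
    (a = Sum.inl i ∧ b = Sum.inl (i + 1)) ∨
    (a = Sum.inl i ∧ b = Sum.inr i) ∨
    (a = Sum.inr i ∧ b = Sum.inr (i + (k : ZMod n))))

/-- Outer-rim edges `uᵢuᵢ₊₁`. -/
def outerEdges (n : ℕ) : Set (Sym2 (ZMod n ⊕ ZMod n)) :=
  {e | ∃ i : ZMod n, e = s(Sum.inl i, Sum.inl (i + 1))}

/-- Spoke edges `uᵢvᵢ`. -/
def spokeEdges (n : ℕ) : Set (Sym2 (ZMod n ⊕ ZMod n)) :=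
  {e | ∃ i : ZMod n, e = s(Sum.inl i, Sum.inr i)}

/-- Inner-rim edges `vᵢvᵢ₊ₖ`. -/
def innerEdges (n k : ℕ) : Set (Sym2 (ZMod n ⊕ ZMod n)) :=
  {e | ∃ i : ZMod n, e = s(Sum.inr i, Sum.inr (i + (k : ZMod n)))}

/-- The subgraph of `G` spanned by the edges of `G` lying in the edge set `s`. -/
def edgeSubgraph {V : Type*} (G : SimpleGraph V) (s : Set (Sym2 V)) : G.Subgraph where
  verts := {v | ∃ e ∈ s ∩ G.edgeSet, v ∈ e}
  Adj a b := G.Adj a b ∧ s(a, b) ∈ s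
  adj_sub h := h.1
  edge_vert {a b} h := ⟨s(a, b), ⟨h.2, (SimpleGraph.mem_edgeSet G).mpr h.1⟩, Sym2.mem_mk_left _ _⟩
  symm := ⟨fun a b h => ⟨h.1.symm, by rw [Sym2.eq_swap]; exact h.2⟩⟩

/-- `C` is a cycle (subgraph) of length `m`: it has `m` vertices, `m` edges, is connected,
and every one of its vertices has exactly two neighbours in it. -/
def IsNCycle {V : Type*} {G : SimpleGraph V} (m : ℕ) (C : G.Subgraph) : Prop :=
  C.verts.ncard = m ∧ C.edgeSet.ncard = m ∧ C.Connected ∧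
    ∀ v ∈ C.verts, (C.neighborSet v).ncard = 2

/-- `sigma8 G e` is the number of 8-cycles of `G` containing the edge `e`. -/
noncomputable def sigma8 {V : Type*} (G : SimpleGraph V) (e : Sym2 V) : ℕ :=
  {C : G.Subgraph | IsNCycle 8 C ∧ e ∈ C.edgeSet}.ncard

open Sum

theorem Set.mem_iff_not_iff_of_subset_triple {α : Type*} {x y z : α} {s : Set α}
    (hxy : x ≠ y) (hxz : x ≠ z) (hyz : y ≠ z) (hs : s ⊆ {x, y, z}) (heven : Even s.ncard) :
    z ∈ s ↔ ¬(x ∈ s ↔ y ∈ s) := by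
  classical
  have hcard : s.ncard = (({x, y, z} : Finset α).filter (· ∈ s)).card := by
    rw [← Set.ncard_coe_finset]
    congr 1
    ext w
    simpa using fun h => hs h
  rw [hcard] at heven
  by_cases hx : x ∈ s <;> by_cases hy : y ∈ s <;> by_cases hz : z ∈ s <;>
    simp_all [Finset.filter_insert, Finset.filter_singleton, Nat.even_iff]

theorem List.ncard_setOf_mem_of_nodup {α : Type*} {L : List α} (hL : L.Nodup) :
    {x | x ∈ L}.ncard = L.length := by
  classical
  rw [← List.coe_toFinset, Set.ncard_coe_finset, List.toFinset_card_of_nodup hL]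

theorem ncard_eq_sub_or_sub_of_boundary {R : Type*} [CommRing R] [Fintype R] {S : Set R}
    {p q : R} (hpq : p ≠ q) (hS : ∀ a, ¬(a ∈ S ↔ a - 1 ∈ S) ↔ a = p ∨ a = q) :
    (S.ncard : R) = q - p ∨ (S.ncard : R) = p - q := by
  classical
  set g : R → R := fun a => if a ∈ S then 1 else 0
  have shift (f : R → R) : ∑ a, f (a - 1) = ∑ a, f a := (Equiv.subRight 1).sum_comp f
  have hcard : ∑ a, g a = S.ncard := by
    simp [g, Finset.sum_boole, Set.ncard_eq_toFinset_card']
  have hflat (a : R) (ha : a ≠ p ∧ a ≠ q) : g a - g (a - 1) = 0 := by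
    have : a ∈ S ↔ a - 1 ∈ S := not_not.mp fun h => by simp_all
    simp [g, this]
  have htotal : (g p - g (p - 1)) + (g q - g (q - 1)) = 0 := by
    rw [← Fintype.sum_eq_add p q hpq hflat, Finset.sum_sub_distrib, shift g, sub_self]
  -- summation by parts: `∑ a * (g a - g (a - 1)) = ∑ a * g a - ∑ (a + 1) * g a`
  have hmoment : p * (g p - g (p - 1)) + q * (g q - g (q - 1)) = -S.ncard := by
    rw [← Fintype.sum_eq_add (f := fun a => a * (g a - g (a - 1))) p q hpq
      fun a ha => by rw [hflat a ha, mul_zero], ← hcard]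
    have := shift fun a => (a + 1) * g a
    simp only [sub_add_cancel] at this
    simp only [mul_sub, Finset.sum_sub_distrib, this, add_mul, one_mul, Finset.sum_add_distrib]
    ring
  have hjump : g p - g (p - 1) = 1 ∨ g p - g (p - 1) = -1 := by
    have := (hS p).mpr (Or.inl rfl)
    by_cases h : p ∈ S <;> simp_all [g]
  rcases hjump with h | h
  · left; linear_combination hmoment - q * htotal - (p - q) * h
  · right; linear_combination hmoment - q * htotal - (p - q) * h

theorem ZMod.natCast_eq_of_eq_or_eq_neg {n a b : ℕ} (ha : 2 * a < n) (hb : 2 * b < n)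
    (h : (a : ZMod n) = b ∨ (a : ZMod n) = -b) : a = b := by
  rcases h with h | h
  · rwa [ZMod.natCast_eq_natCast_iff', Nat.mod_eq_of_lt (by omega),
      Nat.mod_eq_of_lt (by omega)] at h
  · have hdvd : n ∣ a + b := by
      rw [← ZMod.natCast_eq_zero_iff, Nat.cast_add, h, neg_add_cancel]
    have := Nat.eq_zero_of_dvd_of_lt hdvd (by omega)
    omega

theorem SimpleGraph.Subgraph.even_ncard_neighborSet {V : Type*} {G : SimpleGraph V}
    {C : G.Subgraph} (hdeg : ∀ v ∈ C.verts, (C.neighborSet v).ncard = 2) (v : V) :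
    Even (C.neighborSet v).ncard := by
  by_cases hv : v ∈ C.verts
  · rw [hdeg v hv]
    exact even_two
  · have : C.neighborSet v = ∅ := Set.eq_empty_of_forall_notMem fun w hw => hv (C.edge_vert hw)
    rw [this, Set.ncard_empty]
    exact .zero

theorem SimpleGraph.Walk.IsCycle.isNCycle_toSubgraph {V : Type*} {G : SimpleGraph V} {u : V}
    {p : G.Walk u u} (hp : p.IsCycle) : IsNCycle p.length p.toSubgraph := by
  refine ⟨?_, ?_, p.toSubgraph_connected,
    fun v hv => hp.ncard_neighborSet_toSubgraph_eq_two (by simpa using hv)⟩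
  · have : {w | w ∈ p.support} = {w | w ∈ p.support.tail} := by
      ext w
      conv_lhs => rw [← p.cons_tail_support]
      simp only [Set.mem_ofPred_eq, List.mem_cons, or_iff_right_iff_imp]
      rintro rfl
      exact p.end_mem_tail_support hp.not_nil
    rw [Walk.verts_toSubgraph, this, List.ncard_setOf_mem_of_nodup hp.support_nodup,
      List.length_tail, Walk.length_support, Nat.add_sub_cancel]
  · rw [Walk.edgeSet_toSubgraph, Walk.edgeSet, List.ncard_setOf_mem_of_nodup hp.edges_nodup,
      Walk.length_edges]

theorem SimpleGraph.Walk.IsTrail.ncard_edgeSet_inter {V : Type*} {G : SimpleGraph V} {u v : V}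
    {p : G.Walk u v} (hp : p.IsTrail) (s : Set (Sym2 V)) [DecidablePred (· ∈ s)] :
    (p.edgeSet ∩ s).ncard = (p.edges.filter (· ∈ s)).length := by
  rw [← List.ncard_setOf_mem_of_nodup (hp.edges_nodup.filter _)]
  congr 1
  ext
  simp [Walk.edgeSet]

namespace GP

variable {n k : ℕ}

theorem adj_inl_inl {a b : ZMod n} :
    (GP n k).Adj (inl a) (inl b) ↔ a ≠ b ∧ (b = a + 1 ∨ a = b + 1) := by
  simp [GP]

theorem adj_inl_inr {a b : ZMod n} : (GP n k).Adj (inl a) (inr b) ↔ a = b := by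
  simp [GP, eq_comm]

theorem adj_inr_inr {a b : ZMod n} :
    (GP n k).Adj (inr a) (inr b) ↔ a ≠ b ∧ (b = a + k ∨ a = b + k) := by
  simp [GP, eq_comm]

theorem mk_mem_innerEdges_of_adj {a b : ZMod n} (h : (GP n k).Adj (inr a) (inr b)) :
    s(inr a, inr b) ∈ innerEdges n k := by
  rcases (adj_inr_inr.mp h).2 with rfl | rfl
  · exact ⟨a, rfl⟩
  · exact ⟨b, Sym2.eq_swap⟩

theorem neighborSet_inl_subset (C : (GP n k).Subgraph) (a : ZMod n) :
    C.neighborSet (inl a) ⊆ {inl (a + 1), inl (a - 1), inr a} := by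
  intro w hw
  have hadj := C.adj_sub hw
  rcases w with b | b
  · rcases (adj_inl_inl.mp hadj).2 with rfl | rfl
    · simp
    · simp
  · simp [(adj_inl_inr.mp hadj).symm]

def outerIndices (C : (GP n k).Subgraph) : Set (ZMod n) := {a | C.Adj (inl a) (inl (a + 1))}

theorem ncard_outerIndices (h2 : (2 : ZMod n) ≠ 0) (C : (GP n k).Subgraph) :
    (outerIndices C).ncard = (C.edgeSet ∩ outerEdges n).ncard := by
  have hinj : Function.Injective fun a : ZMod n => s(inl a, (inl (a + 1) : ZMod n ⊕ ZMod n)) := by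
    intro a b hab
    rcases Sym2.eq_iff.mp hab with ⟨h, -⟩ | ⟨h, h'⟩
    · exact inl_injective h
    · refine absurd ?_ h2
      linear_combination (inl_injective h'.symm).symm - inl_injective h
  rw [← Set.ncard_image_of_injective _ hinj]
  congr 1
  ext e
  constructor
  · rintro ⟨a, ha, rfl⟩
    exact ⟨ha, a, rfl⟩
  · rintro ⟨he, a, rfl⟩
    exact ⟨a, he, rfl⟩

variable {C : (GP n k).Subgraph}

theorem adj_spoke_iff_mem_boundary (hdeg : ∀ v ∈ C.verts, (C.neighborSet v).ncard = 2)
    (h2 : (2 : ZMod n) ≠ 0) (a : ZMod n) :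
    C.Adj (inl a) (inr a) ↔ ¬(a ∈ outerIndices C ↔ a - 1 ∈ outerIndices C) := by
  have hne : a + 1 ≠ a - 1 := fun h => h2 (by linear_combination h)
  have := Set.mem_iff_not_iff_of_subset_triple (by simpa using hne) (by simp) (by simp)
    (neighborSet_inl_subset C a) (Subgraph.even_ncard_neighborSet hdeg _)
  simpa [outerIndices, Subgraph.adj_comm _ (inl a) (inl (a - 1))] using this

theorem adj_spoke_of_unique_inner (hdeg : ∀ v ∈ C.verts, (C.neighborSet v).ncard = 2)
    {p q : ZMod n} (hpq : C.Adj (inr p) (inr q)) (huniq : ∀ b, C.Adj (inr p) (inr b) → b = q) :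
    C.Adj (inl p) (inr p) := by
  have hsub : C.neighborSet (inr p) ⊆ {inl p, inr q} := by
    intro w hw
    rcases w with b | b
    · simp [adj_inl_inr.mp (C.adj_sub hw).symm]
    · simp [huniq b hw]
  have heq := Set.eq_of_subset_of_ncard_le hsub
    ((Set.ncard_insert_le _ _).trans (by rw [Set.ncard_singleton, hdeg _ (C.edge_vert hpq)]))
  exact (heq ▸ Set.mem_insert _ _ : inl p ∈ C.neighborSet (inr p)).symm

theorem adj_spoke_iff (hdeg : ∀ v ∈ C.verts, (C.neighborSet v).ncard = 2) {p q : ZMod n}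
    (hpq : C.Adj (inr p) (inr q))
    (huniq : ∀ a b, C.Adj (inr a) (inr b) → a = p ∧ b = q ∨ a = q ∧ b = p) (a : ZMod n) :
    C.Adj (inl a) (inr a) ↔ a = p ∨ a = q := by
  have hne : p ≠ q := fun h => (C.adj_sub hpq).ne (congrArg inr h)
  constructor
  · intro ha
    obtain ⟨w, hw, hwa⟩ := Set.exists_ne_of_one_lt_ncard
      (by rw [hdeg _ (C.edge_vert ha.symm)]; norm_num) (inl a)
    rcases w with b | b
    · exact absurd (congrArg inl (adj_inl_inr.mp (C.adj_sub hw).symm)) hwa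
    · exact (huniq a b hw).imp And.left And.left
  · rintro (rfl | rfl)
    · exact adj_spoke_of_unique_inner hdeg hpq fun b hb =>
        ((huniq _ b hb).resolve_right fun h => hne h.1).2
    · exact adj_spoke_of_unique_inner hdeg hpq.symm fun b hb =>
        ((huniq _ b hb).resolve_left fun h => hne h.1.symm).2

theorem exists_inner_edge_of_ncard_eq_one (hi : (C.edgeSet ∩ innerEdges n k).ncard = 1) :
    ∃ p, C.Adj (inr p) (inr (p + k)) ∧
      ∀ a b, C.Adj (inr a) (inr b) → a = p ∧ b = p + k ∨ a = p + k ∧ b = p := by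
  obtain ⟨e, he⟩ := Set.ncard_eq_one.mp hi
  obtain ⟨heC, p, rfl⟩ : e ∈ C.edgeSet ∩ innerEdges n k := he ▸ rfl
  refine ⟨p, heC, fun a b hab => ?_⟩
  have : s(inr a, inr b) ∈ C.edgeSet ∩ innerEdges n k :=
    ⟨hab, mk_mem_innerEdges_of_adj (C.adj_sub hab)⟩
  simpa [he, Sym2.eq_iff] using this

theorem adj_inl_of_add_one_eq (h1 : (1 : ZMod n) ≠ 0) {a b : ZMod n} (h : a + 1 = b) :
    (GP n k).Adj (inl a) (inl b) :=
  adj_inl_inl.mpr ⟨fun hab => h1 (by linear_combination h - hab), .inl h.symm⟩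

def eightCycle (h1 : (1 : ZMod n) ≠ 0) (h5 : (5 : ZMod n) ≠ 0) :
    (GP n 5).Walk (inl 0) (inl 0) :=
  .cons (adj_inl_of_add_one_eq h1 (by norm_num : (0 : ZMod n) + 1 = 1)) <|
  .cons (adj_inl_of_add_one_eq h1 (by norm_num : (1 : ZMod n) + 1 = 2)) <|
  .cons (adj_inl_of_add_one_eq h1 (by norm_num : (2 : ZMod n) + 1 = 3)) <|
  .cons (adj_inl_of_add_one_eq h1 (by norm_num : (3 : ZMod n) + 1 = 4)) <|
  .cons (adj_inl_of_add_one_eq h1 (by norm_num : (4 : ZMod n) + 1 = 5)) <|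
  .cons (adj_inl_inr.mpr rfl : (GP n 5).Adj (inl 5) (inr 5)) <|
  .cons (adj_inr_inr.mpr ⟨fun h => h5 (by simpa using h), .inr (by simp)⟩ :
    (GP n 5).Adj (inr 5) (inr 0)) <|
  .cons (adj_inl_inr.mpr rfl).symm .nil

variable {h1 : (1 : ZMod n) ≠ 0} {h5 : (5 : ZMod n) ≠ 0}

theorem isCycle_eightCycle (hn : 5 < n) : (eightCycle h1 h5).IsCycle := by
  have : Fact (1 < n) := ⟨by omega⟩
  simp (disch := omega) [eightCycle, Walk.cons_isCycle_iff, Walk.isPath_def,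
    ← (ZMod.val_injective n).eq_iff, ZMod.val_ofNat, Nat.mod_eq_of_lt, ZMod.val_one]

theorem ncard_edgeSet_eightCycle_inter (hn : 5 < n) :
    ((eightCycle h1 h5).toSubgraph.edgeSet ∩ outerEdges n).ncard = 5 ∧
      ((eightCycle h1 h5).toSubgraph.edgeSet ∩ spokeEdges n).ncard = 2 ∧
      ((eightCycle h1 h5).toSubgraph.edgeSet ∩ innerEdges n 5).ncard = 1 := by
  classical
  simp only [Walk.edgeSet_toSubgraph, (isCycle_eightCycle hn).isTrail.ncard_edgeSet_inter]
  norm_num [eightCycle, outerEdges, spokeEdges, innerEdges, List.filter_cons, exists_or,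
    inl_ne_inr, inr_ne_inl]

end GP

theorem gp_C5_iff_general (n k : ℕ) (hn : 80 < n) (hk2 : 2 * k < n) :
    (∃ C : (GP n k).Subgraph, IsNCycle 8 C ∧
        (C.edgeSet ∩ outerEdges n).ncard = 5 ∧
        (C.edgeSet ∩ spokeEdges n).ncard = 2 ∧
        (C.edgeSet ∩ innerEdges n k).ncard = 1) ↔ k = 5 := by
  have : NeZero n := ⟨by omega⟩
  have : Fact (1 < n) := ⟨by omega⟩
  obtain ⟨h1, h2, h5⟩ : (1 : ZMod n) ≠ 0 ∧ (2 : ZMod n) ≠ 0 ∧ (5 : ZMod n) ≠ 0 := by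
    simp (disch := omega) [← (ZMod.val_injective n).eq_iff, ZMod.val_ofNat, Nat.mod_eq_of_lt,
      ZMod.val_one]
  constructor
  · rintro ⟨C, ⟨-, -, -, hdeg⟩, ho, -, hi⟩
    obtain ⟨p, hpk, huniq⟩ := GP.exists_inner_edge_of_ncard_eq_one hi
    have hpq : p ≠ p + k := fun h => (C.adj_sub hpk).ne (congrArg inr h)
    have hS := ncard_eq_sub_or_sub_of_boundary hpq fun a =>
      (GP.adj_spoke_iff_mem_boundary hdeg h2 a).symm.trans (GP.adj_spoke_iff hdeg hpk huniq a)
    rw [GP.ncard_outerIndices h2, ho, add_sub_cancel_left, sub_add_cancel_left] at hS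
    exact (ZMod.natCast_eq_of_eq_or_eq_neg (by omega) hk2 (by exact_mod_cast hS)).symm
  · rintro rfl
    exact ⟨_, (GP.isCycle_eightCycle (h1 := h1) (h5 := h5) (by omega)).isNCycle_toSubgraph,
      GP.ncard_edgeSet_eightCycle_inter (by omega)⟩

theorem gp_C5_iff (n k : ℕ) (hn : 80 < n) (hk1 : 1 ≤ k) (hk2 : 2 * k < n) :
    (∃ C : (GP n k).Subgraph, IsNCycle 8 C ∧
        (C.edgeSet ∩ outerEdges n).ncard = 5 ∧
        (C.edgeSet ∩ spokeEdges n).ncard = 2 ∧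
        (C.edgeSet ∩ innerEdges n k).ncard = 1) ↔ k = 5 :=
  gp_C5_iff_general n k hn hk2
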